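/- arXiv:2504.17640 — 3 statements merged into one kernel-verified Lean document; each statement's English description precedes it below -/
import Mathlib

section
/- For every integer k ≥ 1, the integral ∫_0^π (e^{2iθ} - 1)^k / sin(θ) dθ equals 2·(-1)^k·√π·Γ(k)/Γ(k + 1/2). -/
/-! With `w θ = e^{iθ} sin θ = (e^{2iθ} - 1)/(2i)` the integrand is `(2i)^k e^{iθ} w^{k-1}`, and
`w' = 2i w + 1`. Hence `J n = ∫₀^π e^{iθ} w^n` satisfies `(2n+3) J (n+1) = i (n+1) J n`: integrate
the derivative of `e^{iθ} w^{n+1}`, which vanishes at `0` and `π`. Together with `J 0 = 2i`,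
`Γ(s+1) = s Γ(s)` and `Γ(1/2) = √π` this gives `J n = i^{n+1} √π Γ(n+1) / (2^n Γ(n+3/2))`. -/

open Complex Real

noncomputable def expMulSin (θ : ℝ) : ℂ := cexp (I * θ) * Real.sin θ

lemma two_mul_I_mul_expMulSin (θ : ℝ) : 2 * I * expMulSin θ = cexp (2 * I * θ) - 1 := by
  have h : cexp (2 * I * θ) = cexp (I * θ) * cexp (I * θ) := by
    rw [← Complex.exp_add]; ring_nf
  rw [expMulSin, Complex.ofReal_sin, Complex.sin, h]
  have hinv : cexp (-θ * I) * cexp (I * θ) = 1 := by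
    rw [← Complex.exp_add]; ring_nf; exact Complex.exp_zero
  rw [mul_comm (θ : ℂ) I]
  linear_combination (-1 : ℂ) * hinv
    + (cexp (I * θ) * cexp (-θ * I) - cexp (I * θ) ^ 2) * I_sq

lemma expMulSin_zero : expMulSin 0 = 0 := by simp [expMulSin]

lemma expMulSin_pi : expMulSin π = 0 := by simp [expMulSin]

lemma hasDerivAt_expMulSin (θ : ℝ) :
    HasDerivAt expMulSin (2 * I * expMulSin θ + 1) θ := by
  have h : expMulSin = fun t : ℝ => (cexp (2 * I * t) - 1) / (2 * I) := by
    funext t; rw [← two_mul_I_mul_expMulSin]; field_simp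
  have hlin : HasDerivAt (fun t : ℝ => 2 * I * (t : ℂ)) (2 * I) θ := by
    simpa using (ofRealCLM.hasDerivAt (x := θ)).const_mul (2 * I)
  rw [two_mul_I_mul_expMulSin, h]
  refine ((hlin.cexp.sub_const 1).div_const (2 * I)).congr_deriv ?_
  rw [mul_div_cancel_right₀ _ (by simp)]
  ring

lemma hasDerivAt_exp_mul_expMulSin_pow (n : ℕ) (θ : ℝ) :
    HasDerivAt (fun t : ℝ => cexp (I * t) * expMulSin t ^ (n + 1))
      (I * (2 * n + 3) * (cexp (I * θ) * expMulSin θ ^ (n + 1))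
        + (n + 1) * (cexp (I * θ) * expMulSin θ ^ n)) θ := by
  have hexp : HasDerivAt (fun t : ℝ => cexp (I * t)) (I * cexp (I * θ)) θ := by
    simpa [mul_comm] using ((ofRealCLM.hasDerivAt (x := θ)).const_mul I).cexp
  refine (hexp.mul ((hasDerivAt_expMulSin θ).pow (n + 1))).congr_deriv ?_
  simp only [Pi.pow_apply]
  push_cast
  ring

@[fun_prop]
lemma continuous_expMulSin : Continuous expMulSin := by
  unfold expMulSin; fun_prop

noncomputable def expMulSinPowIntegral (n : ℕ) : ℂ :=
  ∫ θ in (0 : ℝ)..π, cexp (I * θ) * expMulSin θ ^ n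

lemma expMulSinPowIntegral_zero : expMulSinPowIntegral 0 = 2 * I := by
  simp only [expMulSinPowIntegral, pow_zero, mul_one]
  rw [integral_exp_mul_complex I_ne_zero, mul_comm I, Complex.exp_pi_mul_I]
  rw [ofReal_zero, mul_zero, Complex.exp_zero, div_eq_iff I_ne_zero]
  linear_combination (-2 : ℂ) * I_sq

lemma expMulSinPowIntegral_succ (n : ℕ) :
    (2 * n + 3) * expMulSinPowIntegral (n + 1) = I * (n + 1) * expMulSinPowIntegral n := by
  have hint : ∀ m, IntervalIntegrable (fun θ : ℝ => cexp (I * θ) * expMulSin θ ^ m)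
      MeasureTheory.volume 0 π := fun m =>
    (by fun_prop : Continuous fun θ : ℝ => cexp (I * θ) * expMulSin θ ^ m).intervalIntegrable _ _
  have h := intervalIntegral.integral_eq_sub_of_hasDerivAt
    (fun θ _ => hasDerivAt_exp_mul_expMulSin_pow n θ)
    (((hint (n + 1)).const_mul _).add ((hint n).const_mul _))
  simp only [expMulSin_zero, expMulSin_pi, zero_pow (Nat.succ_ne_zero n), mul_zero, sub_self,
    intervalIntegral.integral_add ((hint (n + 1)).const_mul _) ((hint n).const_mul _),
    intervalIntegral.integral_const_mul] at h
  rw [← expMulSinPowIntegral, ← expMulSinPowIntegral] at h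
  linear_combination (-I) * h + (2 * n + 3) * expMulSinPowIntegral (n + 1) * I_sq

lemma two_pow_mul_Gamma_mul_expMulSinPowIntegral (n : ℕ) :
    2 ^ n * Real.Gamma (n + 3 / 2) * expMulSinPowIntegral n =
      I ^ (n + 1) * √π * Real.Gamma (n + 1) := by
  induction n with
  | zero =>
    simp only [expMulSinPowIntegral_zero, Nat.cast_zero, zero_add, Real.Gamma_one]
    rw [show (3 / 2 : ℝ) = 1 / 2 + 1 by norm_num, Real.Gamma_add_one (by norm_num),
      Real.Gamma_one_half_eq]
    push_cast
    ring
  | succ n ih =>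
    have hΓ₁ : Real.Gamma (n + 1 + 1) = (n + 1) * Real.Gamma (n + 1) :=
      Real.Gamma_add_one (by positivity)
    have hΓ₂ : Real.Gamma (n + 1 + 3 / 2) = (n + 3 / 2) * Real.Gamma (n + 3 / 2) := by
      rw [← Real.Gamma_add_one (by positivity)]; ring_nf
    rw [Nat.cast_succ, hΓ₁, hΓ₂]
    push_cast
    linear_combination 2 ^ n * (Real.Gamma (n + 3 / 2) : ℂ) * expMulSinPowIntegral_succ n
      + I * (n + 1) * ih

lemma exp_two_mul_I_sub_one_pow_succ_div_sin {θ : ℝ} (hθ : Real.sin θ ≠ 0) (m : ℕ) :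
    (cexp (2 * I * θ) - 1) ^ (m + 1) / (Real.sin θ : ℂ) =
      (2 * I) ^ (m + 1) * (cexp (I * θ) * expMulSin θ ^ m) := by
  have : (Real.sin θ : ℂ) ≠ 0 := by exact_mod_cast hθ
  rw [div_eq_iff this, ← two_mul_I_mul_expMulSin]
  simp only [expMulSin]
  ring

/-- For every integer `k ≥ 1`,
`∫_0^π (e^{2iθ} - 1)^k / sin θ dθ = 2 (-1)^k √π Γ(k)/Γ(k + 1/2)`. -/
theorem stmt5 (k : ℕ) (hk : 1 ≤ k) :
    ∫ θ in (0:ℝ)..Real.pi, (Complex.exp (2 * Complex.I * θ) - 1) ^ k / (Real.sin θ : ℂ) =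
      2 * (-1 : ℂ) ^ k * (Real.sqrt Real.pi : ℂ) * (Real.Gamma k : ℂ) /
        (Real.Gamma (k + 1/2) : ℂ) := by
  obtain ⟨m, rfl⟩ := Nat.exists_eq_add_of_le' hk
  have hΓ : (Real.Gamma (m + 3 / 2) : ℂ) ≠ 0 :=
    ofReal_ne_zero.2 (Real.Gamma_pos_of_pos (by positivity)).ne'
  have hI : I ^ (m + 1) * I ^ (m + 1) = (-1) ^ (m + 1) := by rw [← mul_pow, I_mul_I]
  rw [intervalIntegral.integral_congr_Ioo_of_le Real.pi_pos.le
      fun θ hθ => exp_two_mul_I_sub_one_pow_succ_div_sin (Real.sin_pos_of_mem_Ioo hθ).ne' m,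
    intervalIntegral.integral_const_mul, ← expMulSinPowIntegral,
    Nat.cast_succ, show (m + 1 : ℝ) + 1 / 2 = m + 3 / 2 by ring, eq_div_iff hΓ]
  linear_combination 2 * I ^ (m + 1) * two_pow_mul_Gamma_mul_expMulSinPowIntegral m
    + 2 * √π * (Real.Gamma (m + 1) : ℂ) * hI
end

section
/- Let N be a positive integer and D a positive discriminant. The map (a,b) ↦ [a, b, (b²-D)/(4a)] gives a bijection from the set {(a,b) : a > 0, N | a, 0 ≤ b < 2a, b² ≡ D (mod 4a)} to the set of Γ_∞-orbits of integral binary quadratic forms [a,b,c] with N | a, a > 0, and discriminant b² - 4ac = D, where Γ_∞ = {±(1 n; 0 1) : n ∈ ℤ} acts on forms by (Q∘γ)(x,y) = Q(γ(x,y)). -/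
/-- The map `(a,b) ↦ [a, b, (b²-D)/(4a)]` is a bijection from
`{(a,b) : a > 0, N | a, 0 ≤ b < 2a, b² ≡ D (mod 4a)}` to the set of `Γ_∞`-orbits of
integral binary quadratic forms `[A,B,C]` with `N | A`, `A > 0` and discriminant `D`,
where translation by `n` sends `[a,b,c]` to `[a, b + 2an, an² + bn + c]`.
Formulated as: every such form `[A,B,C]` lies in the `Γ_∞`-orbit of the image of exactly
one admissible pair `(a,b)`. -/
theorem stmt7 (N : ℤ) (hN : 0 < N) (D : ℤ) (hD : 0 < D) (hD4 : D % 4 = 0 ∨ D % 4 = 1) :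
    ∀ A B C : ℤ, N ∣ A → 0 < A → B ^ 2 - 4 * A * C = D →
      ∃! ab : ℤ × ℤ,
        (0 < ab.1 ∧ N ∣ ab.1 ∧ 0 ≤ ab.2 ∧ ab.2 < 2 * ab.1 ∧ (4 * ab.1) ∣ (ab.2 ^ 2 - D)) ∧
        ∃ n : ℤ, A = ab.1 ∧ B = ab.2 + 2 * ab.1 * n ∧
          C = ab.1 * n ^ 2 + ab.2 * n + (ab.2 ^ 2 - D) / (4 * ab.1) := by
  intro A B C hNA hA hdisc
  have h2A : (0:ℤ) < 2 * A := by linarith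
  set q : ℤ := B / (2 * A) with hq
  set b : ℤ := B % (2 * A) with hb
  have hbdef : b = B - 2 * A * q := by rw [hb, hq, Int.emod_def]
  have hkey : b ^ 2 - D = 4 * A * (C - B * q + A * q ^ 2) := by
    rw [hbdef, ← hdisc]; ring
  have h4A : (4 * A : ℤ) ≠ 0 := by positivity
  have hdiv : (b ^ 2 - D) / (4 * A) = C - B * q + A * q ^ 2 := by
    rw [hkey, Int.mul_ediv_cancel_left _ h4A]
  refine ⟨(A, b), ⟨⟨hA, hNA, Int.emod_nonneg _ h2A.ne', Int.emod_lt_of_pos _ h2A,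
      ⟨C - B * q + A * q ^ 2, hkey⟩⟩, q, rfl, by rw [hbdef]; ring, ?_⟩, ?_⟩
  · rw [hdiv, hbdef]; ring
  · rintro ⟨a', b'⟩ ⟨⟨ha', -, hb0, hb2, -⟩, n, rfl, hB, -⟩
    have hbb : b' = b := by
      rw [hb, hB, show b' + 2 * A * n = b' + (2 * A) * n from by ring,
        Int.add_mul_emod_self_left, Int.emod_eq_of_lt hb0 hb2]
    rw [hbb]
end

section
/- For every integer k ≥ 1 and θ ∈ (0, π), the antiderivative identity d/dθ [-2(-1)^k e^{iθ} · ₂F₁(1/2, 1-k; 3/2; e^{2iθ})] = (e^{2iθ}-1)^k / sin(θ) holds, where ₂F₁ is the Gauss hypergeometric function (a polynomial in e^{2iθ} since 1-k is a non-positive integer). -/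
/-!
Put `m = k - 1` and `w = e^{2iθ}`. Since `(3/2)_j = (2j+1) (1/2)_j` and `(-m)_j = (-1)^j j! C(m,j)`,
the function is `-2 (-1)^k ∑ⱼ (-1)^j C(m,j) e^{(2j+1)iθ} / (2j+1)`, whose derivative is
`-2 (-1)^k i e^{iθ} (1 - w)^m` by the binomial theorem. This equals `(w - 1)^k / sin θ`
because `w - 1 = 2i e^{iθ} sin θ`.
-/

open Polynomial

theorem ascPochhammer_eval_neg_natCast {R : Type*} [CommRing R] (m j : ℕ) :
    (ascPochhammer R j).eval (-(m : R)) = (-1) ^ j * j.factorial * m.choose j := by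
  rw [ascPochhammer_eval_neg_eq_descPochhammer, descPochhammer_eval_eq_descFactorial,
    Nat.descFactorial_eq_factorial_mul_choose]
  push_cast
  ring

section Pochhammer

variable {K : Type*} [Field K] [CharZero K]

theorem ascPochhammer_eval_half_ne_zero (j : ℕ) : (ascPochhammer K j).eval (1 / 2 : K) ≠ 0 := by
  rw [Ne, ascPochhammer_eval_eq_zero_iff]
  rintro ⟨i, -, hi⟩
  have : ((2 * i + 1 : ℕ) : K) = 0 := by push_cast; rw [hi]; ring
  exact_mod_cast this

theorem ascPochhammer_eval_three_halves (j : ℕ) :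
    (ascPochhammer K j).eval (3 / 2 : K) = (2 * j + 1) * (ascPochhammer K j).eval (1 / 2 : K) := by
  have h := ascPochhammer_succ_eval j (1 / 2 : K)
  rw [ascPochhammer_succ_left, eval_mul, eval_X, eval_comp, eval_add, eval_X, eval_one] at h
  norm_num at h
  linear_combination 2 * h

theorem hypergeometric_term_half_neg_natCast_three_halves (m j : ℕ) (w : K) :
    (ascPochhammer K j).eval (1 / 2 : K) * (ascPochhammer K j).eval (-(m : K)) /
        (ascPochhammer K j).eval (3 / 2 : K) * w ^ j / j.factorial =
      (-1) ^ j * m.choose j / (2 * j + 1) * w ^ j := by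
  have h2j : (2 * j + 1 : K) ≠ 0 := by exact_mod_cast (2 * j).succ_ne_zero
  have hhalf := ascPochhammer_eval_half_ne_zero (K := K) j
  have hfact : (j.factorial : K) ≠ 0 := by exact_mod_cast j.factorial_ne_zero
  rw [ascPochhammer_eval_neg_natCast, ascPochhammer_eval_three_halves]
  field_simp

end Pochhammer

theorem sum_range_neg_one_pow_mul_choose_mul_pow {R : Type*} [CommRing R] (m : ℕ) (w : R) :
    ∑ j ∈ Finset.range (m + 1), (-1) ^ j * m.choose j * w ^ j = (1 - w) ^ m := by
  rw [sub_eq_neg_add, add_pow]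
  refine Finset.sum_congr rfl fun j _ => ?_
  rw [one_pow, mul_one, neg_pow]
  ring

namespace Complex

theorem exp_two_mul_I_mul_sub_one (θ : ℂ) :
    exp (2 * I * θ) - 1 = 2 * I * exp (I * θ) * sin θ := by
  have hsq : exp (I * θ) ^ 2 = exp (2 * I * θ) := by rw [← exp_nat_mul]; push_cast; ring_nf
  have hinv : exp (I * θ) * exp (-θ * I) = 1 := by rw [← exp_add]; ring_nf; exact exp_zero
  rw [sin, ← hsq, show θ * I = I * θ by ring]
  linear_combination -(exp (I * θ) * (exp (-θ * I) - exp (I * θ))) * I_sq + hinv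

theorem hasDerivAt_const_mul_exp_I_mul_sum_div_odd (c : ℂ) (b : ℕ → ℂ) (n : ℕ) (t : ℝ) :
    HasDerivAt
      (fun s : ℝ => c * exp (I * s) * ∑ j ∈ Finset.range n, b j / (2 * j + 1) * exp (2 * I * s) ^ j)
      (c * I * exp (I * t) * ∑ j ∈ Finset.range n, b j * exp (2 * I * t) ^ j) t := by
  have hterm (j : ℕ) (s : ℝ) : exp (I * s) * exp (2 * I * s) ^ j = exp ((2 * j + 1) * I * s) := by
    rw [← exp_nat_mul, ← exp_add]; ring_nf
  simp only [Finset.mul_sum]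
  refine HasDerivAt.fun_sum fun j _ => ?_
  have h2j : (2 * j + 1 : ℂ) ≠ 0 := by exact_mod_cast (2 * j).succ_ne_zero
  have hlin : HasDerivAt (fun s : ℝ => (2 * j + 1) * I * (s : ℂ)) ((2 * j + 1) * I) t := by
    simpa using (ofRealCLM.hasDerivAt (x := t)).const_mul ((2 * j + 1) * I)
  have hexp := hlin.cexp.const_mul (c * b j / (2 * j + 1))
  simp only [← hterm] at hexp
  have hfun : (fun s : ℝ => c * exp (I * s) * (b j / (2 * j + 1) * exp (2 * I * s) ^ j)) =
      fun s : ℝ => c * b j / (2 * j + 1) * (exp (I * s) * exp (2 * I * s) ^ j) := by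
    funext s
    ring
  rw [hfun]
  exact hexp.congr_deriv (by field_simp)

end Complex

/-- For `k ≥ 1` and `θ ∈ (0,π)`:
`d/dθ [-2 (-1)^k e^{iθ} ₂F₁(1/2, 1-k; 3/2; e^{2iθ})] = (e^{2iθ}-1)^k / sin θ`,
where `₂F₁(1/2, 1-k; 3/2; w) = ∑_{j=0}^{k-1} ((1/2)_j (1-k)_j / (3/2)_j) w^j / j!`
is a polynomial since `1-k` is a non-positive integer. -/
theorem stmt19 (k : ℕ) (hk : 1 ≤ k) (θ : ℝ) (hθ : θ ∈ Set.Ioo 0 Real.pi) :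
    deriv (fun t : ℝ => -2 * (-1 : ℂ) ^ k * Complex.exp (Complex.I * t) *
        ∑ j ∈ Finset.range k,
          ((ascPochhammer ℂ j).eval (1 / 2 : ℂ) * (ascPochhammer ℂ j).eval (1 - (k : ℂ))) /
            ((ascPochhammer ℂ j).eval (3 / 2 : ℂ)) *
            (Complex.exp (2 * Complex.I * t)) ^ j / (j.factorial : ℂ)) θ =
      (Complex.exp (2 * Complex.I * θ) - 1) ^ k / (Real.sin θ : ℂ) := by
  obtain ⟨m, rfl⟩ : ∃ m, k = m + 1 := ⟨k - 1, by omega⟩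
  have hsin : (Real.sin θ : ℂ) ≠ 0 := by exact_mod_cast (Real.sin_pos_of_pos_of_lt_pi hθ.1 hθ.2).ne'
  have hparam : (1 - ((m + 1 : ℕ) : ℂ)) = -(m : ℂ) := by push_cast; ring
  simp only [hparam, hypergeometric_term_half_neg_natCast_three_halves]
  rw [(Complex.hasDerivAt_const_mul_exp_I_mul_sum_div_odd _ _ _ θ).deriv,
    sum_range_neg_one_pow_mul_choose_mul_pow, ← neg_sub _ (1 : ℂ), neg_pow (_ - 1),
    Complex.exp_two_mul_I_mul_sub_one, ← Complex.ofReal_sin]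
  have hsign : (-1 : ℂ) ^ (m + 1) * (-1) ^ m = -1 := by
    rw [← pow_add]; exact Odd.neg_one_pow ⟨m, by ring⟩
  rw [eq_div_iff hsin]
  linear_combination (-2 * Complex.I * Complex.exp (Complex.I * θ) * Real.sin θ *
    (2 * Complex.I * Complex.exp (Complex.I * θ) * Real.sin θ) ^ m) * hsign
end
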